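/- Let K ≥ 1, let g' : Fin K → ℝ and g : Fin K → ℝ be strictly positive downlink and uplink channel gains, let θ > 0, p_c > 0, p_t > 0. Define v_n = (1/g'_n)·(θ/g_n + p_c) for each n, let v̄_1 ≤ v̄_2 ≤ … ≤ v̄_K be the ascending rearrangement of (v_n), and let q_max be the largest integer q ∈ {0,1,…,K} with ∑_{n=1}^q v̄_n ≤ p_t. Then the maximum over allocations P : Fin K → ℝ with P_n ≥ 0 and ∑_{n=1}^K P_n ≤ p_t of ∑_{n=1}^K 𝟙[(P_n·g'_n − p_c)·g_n ≥ θ]·𝟙[P_n·g'_n ≥ p_c] equals q_max, attained by assigning P_n = v_n to the q_max mobiles with the smallest values v_n and zero to the rest. -/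

import Mathlib

/-!
Mobile `n` is served by `P` exactly when `P n ≥ v n`: the uplink condition says
`P n g'_n ≥ θ / g_n + p_c`, which already implies the circuit-power condition. Hence the
served set `S` of a feasible allocation satisfies `∑_{n ∈ S} v n ≤ p_t`; the `|S|` smallest
values `v̄_1, …, v̄_{|S|}` cost no more, so `|S| ≤ q_max` by maximality of `q_max`. Conversely,
paying `v n` to the `q_max` cheapest mobiles is within budget and serves exactly them.
-/

open Finset

theorem Fin.val_le_val_of_strictMono {s K : ℕ} {φ : Fin s → Fin K} (hφ : StrictMono φ)
    (i : Fin s) : (i : ℕ) ≤ φ i := by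
  simpa using card_le_card_of_injOn φ (s := Iio i) (t := Iio (φ i))
    (fun j hj => by simpa using hφ (by simpa using hj)) hφ.injective.injOn

theorem Fin.filter_val_lt_eq_map_castLEEmb {s K : ℕ} (hs : s ≤ K) :
    univ.filter (fun n : Fin K => (n : ℕ) < s) = univ.map (Fin.castLEEmb hs) := by
  ext n
  simp only [mem_filter, mem_univ, true_and, mem_map, Fin.castLEEmb_apply]
  exact ⟨fun h => ⟨⟨n, h⟩, rfl⟩, by rintro ⟨i, rfl⟩; exact i.isLt⟩

theorem Monotone.sum_filter_val_lt_card_le_sum {M : Type*} [AddCommMonoid M] [PartialOrder M]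
    [IsOrderedAddMonoid M] {K : ℕ} {f : Fin K → M} (hf : Monotone f) (T : Finset (Fin K)) :
    ∑ n ∈ univ.filter (fun n : Fin K => (n : ℕ) < #T), f n ≤ ∑ n ∈ T, f n := by
  have hT : #T ≤ K := by simpa using T.card_le_univ
  conv_rhs => rw [← T.map_orderEmbOfFin_univ rfl]
  rw [Fin.filter_val_lt_eq_map_castLEEmb hT, sum_map, sum_map]
  exact sum_le_sum fun i _ =>
    hf (Fin.le_def.2 (Fin.val_le_val_of_strictMono (T.orderEmbOfFin rfl).strictMono i))

theorem served_iff_inversion_le {a b θ pc P : ℝ} (ha : 0 < a) (hb : 0 < b) (hθ : 0 ≤ θ) :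
    θ ≤ (P * a - pc) * b ∧ pc ≤ P * a ↔ 1 / a * (θ / b + pc) ≤ P := by
  rw [one_div_mul_eq_div, div_le_iff₀ ha, ← le_sub_iff_add_le, div_le_iff₀ hb]
  refine ⟨And.left, fun h => ⟨h, ?_⟩⟩
  linarith [(div_le_iff₀ hb).2 h, div_nonneg hθ hb.le]

theorem stmt_17_general (K : ℕ) (g' g : Fin K → ℝ) (τ : Equiv.Perm (Fin K))
    (θ pc pt : ℝ) (qmax : ℕ) (vbar : Fin K → ℝ)
    (hg' : ∀ n, 0 < g' n) (hg : ∀ n, 0 < g n)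
    (hθ : 0 < θ) (hpc : 0 < pc)
    (hperm : ∀ n, vbar n = (1 / g' (τ n)) * (θ / g (τ n) + pc))
    (hasc : Monotone vbar)
    (hqK : qmax ≤ K)
    (hqfeas : (∑ n ∈ Finset.univ.filter (fun n : Fin K => (n : ℕ) < qmax), vbar n)
      ≤ pt)
    (hqmax : ∀ q ≤ K,
      (∑ n ∈ Finset.univ.filter (fun n : Fin K => (n : ℕ) < q), vbar n) ≤ pt →
      q ≤ qmax) :
    let served : (Fin K → ℝ) → ℕ := fun P =>
      (Finset.univ.filter (fun n : Fin K =>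
        θ ≤ (P n * g' n - pc) * g n ∧ pc ≤ P n * g' n)).card
    let Pstar : Fin K → ℝ := fun n =>
      if ((τ.symm n : Fin K) : ℕ) < qmax then (1 / g' n) * (θ / g n + pc) else 0
    (∀ P : Fin K → ℝ, (∀ n, 0 ≤ P n) → (∑ n, P n) ≤ pt → served P ≤ qmax) ∧
    ((∀ n, 0 ≤ Pstar n) ∧ (∑ n, Pstar n) ≤ pt ∧ served Pstar = qmax) := by
  intro served Pstar
  set v : Fin K → ℝ := fun n => 1 / g' n * (θ / g n + pc)
  have hv_pos n : 0 < v n := by have := hg' n; have := hg n; positivity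
  have hv_comp n : v (τ n) = vbar n := (hperm n).symm
  have served_eq P : served P = #{n | v n ≤ P n} :=
    congrArg card <| filter_congr fun n _ => served_iff_inversion_le (hg' n) (hg n) hθ.le
  refine ⟨fun P hP hsum => ?_, fun n => ?_, ?_, ?_⟩
  · set S : Finset (Fin K) := {n | v n ≤ P n}
    have hS : ∑ n ∈ S.map τ.symm.toEmbedding, vbar n ≤ pt := calc
      _ = ∑ n ∈ S, v n := by simp [← hv_comp]
      _ ≤ ∑ n ∈ S, P n := sum_le_sum fun n hn => (mem_filter.1 hn).2
      _ ≤ ∑ n, P n := sum_le_sum_of_subset_of_nonneg (subset_univ S) fun n _ _ => hP n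
      _ ≤ pt := hsum
    rw [served_eq, ← card_map τ.symm.toEmbedding]
    exact hqmax _ (by simpa using card_le_univ (S.map τ.symm.toEmbedding))
      ((hasc.sum_filter_val_lt_card_le_sum _).trans hS)
  · exact ite_nonneg (hv_pos n).le le_rfl
  · refine le_of_eq_of_le ?_ hqfeas
    rw [← Equiv.sum_comp τ, sum_filter]
    simp [Pstar, hperm]
  · rw [served_eq, ← card_map τ.symm.toEmbedding, ← min_eq_right hqK, ← Fin.card_filter_val_lt]
    congr 1
    ext m
    by_cases hm : (m : ℕ) < qmax
    · simp [Pstar, hm, v]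
    · simpa [Pstar, hm, v] using hv_pos (τ m)

/-- Multi-user uplink IT with fixed coding rates (Proposition 5): with
`v_n = (θ/g_n + p_c)/g'_n`, ascending rearrangement `v̄`, and `q_max` the
largest `q ∈ {0,…,K}` with `∑_{n=1}^q v̄_n ≤ p_t`, the maximum number of served
mobiles — those with `(P_n g'_n − p_c) g_n ≥ θ` and `P_n g'_n ≥ p_c` — over
allocations `P ≥ 0` with `∑ P_n ≤ p_t` equals `q_max`, attained by assigning
`P_n = v_n` to the `q_max` mobiles with the smallest `v_n` and zero elsewhere. -/
theorem stmt_17 (K : ℕ) (hK : 1 ≤ K) (g' g : Fin K → ℝ) (τ : Equiv.Perm (Fin K))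
    (θ pc pt : ℝ) (qmax : ℕ) (vbar : Fin K → ℝ)
    (hg' : ∀ n, 0 < g' n) (hg : ∀ n, 0 < g n)
    (hθ : 0 < θ) (hpc : 0 < pc) (hpt : 0 < pt)
    (hperm : ∀ n, vbar n = (1 / g' (τ n)) * (θ / g (τ n) + pc))
    (hasc : Monotone vbar)
    (hqK : qmax ≤ K)
    (hqfeas : (∑ n ∈ Finset.univ.filter (fun n : Fin K => (n : ℕ) < qmax), vbar n)
      ≤ pt)
    (hqmax : ∀ q ≤ K,
      (∑ n ∈ Finset.univ.filter (fun n : Fin K => (n : ℕ) < q), vbar n) ≤ pt →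
      q ≤ qmax) :
    let served : (Fin K → ℝ) → ℕ := fun P =>
      (Finset.univ.filter (fun n : Fin K =>
        θ ≤ (P n * g' n - pc) * g n ∧ pc ≤ P n * g' n)).card
    let Pstar : Fin K → ℝ := fun n =>
      if ((τ.symm n : Fin K) : ℕ) < qmax then (1 / g' n) * (θ / g n + pc) else 0
    (∀ P : Fin K → ℝ, (∀ n, 0 ≤ P n) → (∑ n, P n) ≤ pt → served P ≤ qmax) ∧
    ((∀ n, 0 ≤ Pstar n) ∧ (∑ n, Pstar n) ≤ pt ∧ served Pstar = qmax) :=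
  stmt_17_general K g' g τ θ pc pt qmax vbar hg' hg hθ hpc hperm hasc hqK hqfeas hqmax
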